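/- arXiv:2509.07652 — 4 statements merged into one kernel-verified Lean document; each statement's English description precedes it below -/
import Mathlib

section
/- Let μ > 1 and let (c_k)_{k≥1} be a nondecreasing sequence of positive real numbers. Suppose there exist constants C > 0 and k₀ ∈ ℕ such that c_{k+1} − c_k ≤ C (c_{k+1}^{1/μ} + c_k^{1/μ} + 1) for all k ≥ k₀. Then there exists a constant C' > 0 such that c_k ≤ C' k^{μ/(μ−1)} for all k ≥ 1. -/
/-!
Put `β = 1/μ` and `d_k = c_k ^ (1 - β) = c_k / c_k ^ β`. For `a ≤ b` one has
`b ^ (1 - β) - a ^ (1 - β) ≤ (b - a) / b ^ β`, and once `c_{k+1} ≥ 1` the hypothesis gives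
`c_{k+1} - c_k ≤ 3C c_{k+1} ^ β`; hence `d` has bounded increments, grows at most linearly,
`d_k ≤ A k`, and raising to the power `1 / (1 - β) = μ / (μ - 1)` gives the bound on `c_k`.
-/

open Set

namespace Real

lemma rpow_one_sub_sub_rpow_one_sub_le {a b β : ℝ} (ha : 0 < a) (hab : a ≤ b) (hβ : 0 ≤ β) :
    b ^ (1 - β) - a ^ (1 - β) ≤ (b - a) / b ^ β := by
  have hb : 0 < b := ha.trans_le hab
  have haβ : 0 < a ^ β := rpow_pos_of_pos ha β
  have hβab : a ^ β ≤ b ^ β := rpow_le_rpow ha.le hab hβ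
  rw [rpow_sub ha, rpow_sub hb, rpow_one, rpow_one, sub_div]
  gcongr

lemma rpow_one_sub_le_add_of_sub_le {a b β C : ℝ} (ha : 0 < a) (hab : a ≤ b) (hβ₀ : 0 ≤ β)
    (hβ₁ : β ≤ 1) (hC : 0 ≤ C) (h : b - a ≤ C * (b ^ β + a ^ β + 1)) :
    b ^ (1 - β) ≤ a ^ (1 - β) + (3 * C + 1) := by
  have haα : 0 ≤ a ^ (1 - β) := rpow_nonneg ha.le _
  rcases le_or_gt b 1 with hb1 | hb1
  · have : b ^ (1 - β) ≤ 1 := rpow_le_one (ha.le.trans hab) hb1 (by linarith)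
    linarith
  · have hbβ : 1 ≤ b ^ β := one_le_rpow hb1.le hβ₀
    have hβab : a ^ β ≤ b ^ β := rpow_le_rpow ha.le hab hβ₀
    have hinc : b - a ≤ 3 * C * b ^ β := by nlinarith
    have hgain : (b - a) / b ^ β ≤ 3 * C := by
      rwa [div_le_iff₀ (by positivity)]
    linarith [rpow_one_sub_sub_rpow_one_sub_le ha hab hβ₀]

end Real

section LinearGrowth

variable {u : ℕ → ℝ} {K : ℝ} {k₁ : ℕ}

lemma le_add_mul_sub_of_le_succ_add (hstep : ∀ k, k₁ ≤ k → u (k + 1) ≤ u k + K) {k : ℕ}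
    (hk : k₁ ≤ k) : u k ≤ u k₁ + K * (k - k₁) := by
  induction k, hk using Nat.le_induction with
  | base => simp
  | succ k hk ih =>
    push_cast
    linarith [hstep k hk]

lemma le_mul_of_le_succ_add (hk₁ : 1 ≤ k₁) (hK : 0 ≤ K) (hu : 0 ≤ u k₁)
    (hmono : MonotoneOn u (Ici 1)) (hstep : ∀ k, k₁ ≤ k → u (k + 1) ≤ u k + K) {k : ℕ}
    (hk : 1 ≤ k) : u k ≤ (u k₁ + K) * k := by
  have hk' : (1 : ℝ) ≤ k := by exact_mod_cast hk
  rcases le_total k k₁ with hkk₁ | hkk₁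
  · have : u k ≤ u k₁ := hmono (mem_Ici.2 hk) (mem_Ici.2 hk₁) hkk₁
    nlinarith
  · have hlin := le_add_mul_sub_of_le_succ_add hstep hkk₁
    have : (1 : ℝ) ≤ k₁ := by exact_mod_cast hk₁
    nlinarith

end LinearGrowth

theorem stmt_0 (μ : ℝ) (hμ : 1 < μ) (c : ℕ → ℝ)
    (hpos : ∀ k, 1 ≤ k → 0 < c k)
    (hmono : ∀ k, 1 ≤ k → c k ≤ c (k + 1))
    (C : ℝ) (hC : 0 < C) (k₀ : ℕ)
    (hrec : ∀ k, k₀ ≤ k →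
      c (k + 1) - c k ≤ C * (c (k + 1) ^ (1 / μ) + c k ^ (1 / μ) + 1)) :
    ∃ C' : ℝ, 0 < C' ∧ ∀ k, 1 ≤ k → c k ≤ C' * (k : ℝ) ^ (μ / (μ - 1)) := by
  have hμ₀ : 0 < μ := by linarith
  have hβ₀ : 0 ≤ 1 / μ := by positivity
  have hβ₁ : 1 / μ ≤ 1 := by rw [div_le_one hμ₀]; linarith
  have hα : 0 < 1 - 1 / μ := by rw [sub_pos, div_lt_one hμ₀]; exact hμ
  have hexp : (1 - 1 / μ)⁻¹ = μ / (μ - 1) := by field_simp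
  set k₁ := max k₀ 1
  have hk₁ : 1 ≤ k₁ := le_max_right _ _
  have hcmono : MonotoneOn c (Ici 1) := monotoneOn_nat_Ici_of_le_succ hmono
  have hstep : ∀ k, k₁ ≤ k → c (k + 1) ^ (1 - 1 / μ) ≤ c k ^ (1 - 1 / μ) + (3 * C + 1) :=
    fun k hk ↦ Real.rpow_one_sub_le_add_of_sub_le (hpos k (hk₁.trans hk))
      (hmono k (hk₁.trans hk)) hβ₀ hβ₁ hC.le (hrec k ((le_max_left _ _).trans hk))
  have hdmono : MonotoneOn (fun k ↦ c k ^ (1 - 1 / μ)) (Ici 1) := fun a ha b hb hab ↦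
    Real.rpow_le_rpow (hpos a ha).le (hcmono ha hb hab) hα.le
  have hd₁ : 0 ≤ c k₁ ^ (1 - 1 / μ) := Real.rpow_nonneg (hpos k₁ hk₁).le _
  set A := c k₁ ^ (1 - 1 / μ) + (3 * C + 1)
  have hA : 0 < A := by positivity
  refine ⟨A ^ (μ / (μ - 1)), by positivity, fun k hk ↦ ?_⟩
  have hgrowth : c k ^ (1 - 1 / μ) ≤ A * k :=
    le_mul_of_le_succ_add hk₁ (by positivity) hd₁ hdmono hstep hk
  calc c k ≤ (A * k) ^ (1 - 1 / μ)⁻¹ :=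
        (Real.le_rpow_inv_iff_of_pos (hpos k hk).le (mul_nonneg hA.le k.cast_nonneg) hα).2 hgrowth
    _ = A ^ (μ / (μ - 1)) * (k : ℝ) ^ (μ / (μ - 1)) := by
        rw [hexp, Real.mul_rpow hA.le (by positivity)]
end

section
/- Let m ≥ 1, η > 0, δ > 2 and 0 < ε < δ − 2, and define G : ℝ^m → ℝ by G(U) = η[(δ−2)|U|^{δ−ε} sin²(|U|^{ε}/ε) + |U|^{δ}]. Then for every U ≠ 0, ½(∇G(U),U) − G(U) = η(δ−2)[ ((δ−ε−2)/2)|U|^{δ−ε} sin²(|U|^{ε}/ε) + (|U|^{δ}/2)(1 + sin(2|U|^{ε}/ε)) ], and in particular ½(∇G(U),U) − G(U) > 0 for all U ≠ 0. -/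
open RealInnerProductSpace Real

/-!
`G` is radial, `G U = g ‖U‖`, so Euler's identity for the directional derivative along the ray gives
`(∇G(U), U) = r g'(r)` with `r = ‖U‖`, and the claimed formula is a computation with the
one-variable profile `g`. Positivity: `1 + sin 2θ = (sin θ + cos θ)²` is nonnegative, and it
equals `1` where the `sin² θ` term vanishes.
-/

lemma fderiv_comp_norm_apply_self {E : Type*} [NormedAddCommGroup E] [NormedSpace ℝ E]
    {g : ℝ → ℝ} {g' : ℝ} {x : E} (hg : HasDerivAt g g' ‖x‖)
    (hx : DifferentiableAt ℝ (‖·‖) x) :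
    fderiv ℝ (fun y => g ‖y‖) x x = ‖x‖ * g' := by
  have hG : HasFDerivAt (fun y => g ‖y‖) (g' • fderiv ℝ (‖·‖) x) x :=
    hg.comp_hasFDerivAt x hx.hasFDerivAt
  rw [hG.fderiv, smul_apply, hx.fderiv_norm_self, smul_eq_mul, mul_comm]

lemma inner_gradient_comp_norm_self {E : Type*} [NormedAddCommGroup E] [InnerProductSpace ℝ E]
    [CompleteSpace E] {g : ℝ → ℝ} {g' : ℝ} {x : E} (hg : HasDerivAt g g' ‖x‖) (hx : x ≠ 0) :
    ⟪gradient (fun y => g ‖y‖) x, x⟫ = ‖x‖ * g' := by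
  rw [inner_gradient_left]
  exact fderiv_comp_norm_apply_self hg (differentiableAt_id.norm ℝ hx)

lemma sin_sq_add_one_add_sin_two_mul_pos {a b : ℝ} (ha : 0 < a) (hb : 0 < b) (θ : ℝ) :
    0 < a * sin θ ^ 2 + b * (1 + sin (2 * θ)) := by
  have hsq : 1 + sin (2 * θ) = (sin θ + cos θ) ^ 2 := by
    rw [sin_two_mul]; linear_combination -sin_sq_add_cos_sq θ
  rw [hsq]
  rcases eq_or_ne (sin θ) 0 with hs | hs
  · have hc : cos θ ^ 2 = 1 := by simpa [hs] using sin_sq_add_cos_sq θ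
    simp [hs, hc, hb]
  · positivity

noncomputable section Profile

variable (η δ ε : ℝ)

def profile (r : ℝ) : ℝ := η * ((δ - 2) * r ^ (δ - ε) * sin (r ^ ε / ε) ^ 2 + r ^ δ)

def profileDeriv (r : ℝ) : ℝ :=
  η * ((δ - 2) * ((δ - ε) * r ^ (δ - ε - 1) * sin (r ^ ε / ε) ^ 2 +
    r ^ (δ - ε) * (2 * sin (r ^ ε / ε) * (cos (r ^ ε / ε) * r ^ (ε - 1)))) + δ * r ^ (δ - 1))

variable {η δ ε}

lemma hasDerivAt_profile {r : ℝ} (hr : 0 < r) (hε : ε ≠ 0) :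
    HasDerivAt (profile η δ ε) (profileDeriv η δ ε r) r := by
  have hsin : HasDerivAt (fun t => sin (t ^ ε / ε)) (cos (r ^ ε / ε) * r ^ (ε - 1)) r := by
    convert ((hasDerivAt_rpow_const (p := ε) (Or.inl hr.ne')).div_const ε).sin using 1
    field_simp
  have := (((hasDerivAt_rpow_const (p := δ - ε) (Or.inl hr.ne')).const_mul (δ - 2)).mul
    (hsin.pow 2)).add (hasDerivAt_rpow_const (p := δ) (Or.inl hr.ne')) |>.const_mul η
  refine this.congr_deriv ?_
  simp only [profileDeriv, Pi.pow_apply]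
  push_cast
  ring

lemma half_mul_profileDeriv_sub_profile {r : ℝ} (hr : 0 < r) :
    1 / 2 * (r * profileDeriv η δ ε r) - profile η δ ε r =
      η * (δ - 2) * ((δ - ε - 2) / 2 * r ^ (δ - ε) * sin (r ^ ε / ε) ^ 2 +
        r ^ δ / 2 * (1 + sin (2 * (r ^ ε / ε)))) := by
  have hsplit : r ^ δ = r ^ (δ - ε) * r ^ ε := by rw [← rpow_add hr]; ring_nf
  simp only [profile, profileDeriv, rpow_sub_one hr.ne', hsplit, sin_two_mul]
  field_simp
  ring

end Profile

theorem stmt_6_general (m : ℕ) (η δ ε : ℝ) (hη : 0 < η)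
    (hε : 0 < ε) (hεδ : ε < δ - 2)
    (G : EuclideanSpace ℝ (Fin m) → ℝ)
    (hGdef : ∀ U : EuclideanSpace ℝ (Fin m),
      G U = η * ((δ - 2) * ‖U‖ ^ (δ - ε) * Real.sin (‖U‖ ^ ε / ε) ^ 2 + ‖U‖ ^ δ)) :
    ∀ U : EuclideanSpace ℝ (Fin m), U ≠ 0 →
      (1 / 2) * ⟪gradient G U, U⟫ - G U =
        η * (δ - 2) * ((δ - ε - 2) / 2 * ‖U‖ ^ (δ - ε) * Real.sin (‖U‖ ^ ε / ε) ^ 2 +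
          ‖U‖ ^ δ / 2 * (1 + Real.sin (2 * ‖U‖ ^ ε / ε))) ∧
      0 < (1 / 2) * ⟪gradient G U, U⟫ - G U := by
  intro U hU
  have hG : G = fun y => profile η δ ε ‖y‖ := funext hGdef
  have hr : 0 < ‖U‖ := norm_pos_iff.mpr hU
  have key : (1 / 2) * ⟪gradient G U, U⟫ - G U =
      η * (δ - 2) * ((δ - ε - 2) / 2 * ‖U‖ ^ (δ - ε) * sin (‖U‖ ^ ε / ε) ^ 2 +
        ‖U‖ ^ δ / 2 * (1 + sin (2 * (‖U‖ ^ ε / ε)))) := by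
    rw [hG, inner_gradient_comp_norm_self (hasDerivAt_profile hr hε.ne') hU,
      half_mul_profileDeriv_sub_profile hr]
  rw [mul_div_assoc, key]
  refine ⟨rfl, mul_pos (mul_pos hη (by linarith)) ?_⟩
  exact sin_sq_add_one_add_sin_two_mul_pos
    (mul_pos (by linarith) (rpow_pos_of_pos hr _)) (by positivity) _

theorem stmt_6 (m : ℕ) (hm : 1 ≤ m) (η δ ε : ℝ) (hη : 0 < η) (hδ : 2 < δ)
    (hε : 0 < ε) (hεδ : ε < δ - 2)
    (G : EuclideanSpace ℝ (Fin m) → ℝ)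
    (hGdef : ∀ U : EuclideanSpace ℝ (Fin m),
      G U = η * ((δ - 2) * ‖U‖ ^ (δ - ε) * Real.sin (‖U‖ ^ ε / ε) ^ 2 + ‖U‖ ^ δ)) :
    ∀ U : EuclideanSpace ℝ (Fin m), U ≠ 0 →
      (1 / 2) * ⟪gradient G U, U⟫ - G U =
        η * (δ - 2) * ((δ - ε - 2) / 2 * ‖U‖ ^ (δ - ε) * Real.sin (‖U‖ ^ ε / ε) ^ 2 +
          ‖U‖ ^ δ / 2 * (1 + Real.sin (2 * ‖U‖ ^ ε / ε))) ∧
      0 < (1 / 2) * ⟪gradient G U, U⟫ - G U :=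
  stmt_6_general m η δ ε hη hε hεδ G hGdef
end

section
/- Let m ≥ 1 and η > 0, and define G : ℝ^m → ℝ by G(U) = η|U|² ln(1+|U|²). Then there exist constants r₀, r₁ > 0 and exponents γ₁, γ₂ ∈ (0,1) such that (∇G(U),U) ≤ r₀ (½(∇G(U),U) − G(U))^{γ₁} |U|^{γ₂} for all U with |U| ≥ r₁. -/
/-!
`G` is radial, so with `s = ‖U‖²` one has `⟪∇G U, U⟫ = 2ηs (log (1 + s) + s / (1 + s))` and
`½ ⟪∇G U, U⟫ - G U = ηs² / (1 + s) ≥ ηs / 2` for `s ≥ 1`. Taking `γ₁ = γ₂ = 3/4`, the right-hand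
side therefore grows like `‖U‖ ^ (9/4)`, which dominates `‖U‖² log (1 + ‖U‖²)` because
`log r ≤ 4 r ^ (1/4)`.
-/

open Real RealInnerProductSpace

theorem HasDerivAt.hasGradientAt_comp_norm_sq {E : Type*} [NormedAddCommGroup E]
    [InnerProductSpace ℝ E] [CompleteSpace E] {φ : ℝ → ℝ} {φ' : ℝ} {x : E}
    (h : HasDerivAt φ φ' (‖x‖ ^ 2)) :
    HasGradientAt (fun y => φ (‖y‖ ^ 2)) ((2 * φ') • x) x := by
  rw [hasGradientAt_iff_hasFDerivAt]
  refine (h.comp_hasFDerivAt x (hasFDerivAt_id x).norm_sq).congr_fderiv ?_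
  ext y
  simp
  ring

theorem hasDerivAt_mul_mul_log_one_add (η : ℝ) {t : ℝ} (ht : -1 < t) :
    HasDerivAt (fun t => η * t * log (1 + t)) (η * (log (1 + t) + t / (1 + t))) t := by
  have hlog : HasDerivAt (fun t => log (1 + t)) (1 / (1 + t)) t := by
    simpa using ((hasDerivAt_id t).const_add 1).log (by linarith : (0 : ℝ) < 1 + t).ne'
  refine (((hasDerivAt_id' t).const_mul η).mul hlog).congr_deriv ?_
  field_simp

theorem log_one_add_sq_add_one_le {r : ℝ} (hr : 1 ≤ r) :
    log (1 + r ^ 2) + 1 ≤ 10 * r ^ (1 / 4 : ℝ) := by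
  have hr0 : 0 < r := by linarith
  have h_one : 1 ≤ r ^ (1 / 4 : ℝ) := one_le_rpow hr (by norm_num)
  have h_log_r : log r ≤ 4 * r ^ (1 / 4 : ℝ) := by
    have := log_le_rpow_div hr0.le (show (0 : ℝ) < 1 / 4 by norm_num)
    linarith
  calc log (1 + r ^ 2) + 1 ≤ log (2 * r ^ 2) + 1 := by
        gcongr
        nlinarith
    _ = log 2 + 2 * log r + 1 := by
        rw [log_mul two_ne_zero (by positivity), log_pow]
        push_cast
        ring
    _ ≤ 10 * r ^ (1 / 4 : ℝ) := by linarith [log_two_lt_d9]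

theorem sq_mul_log_one_add_sq_le_rpow_mul_rpow {η r : ℝ} (hη : 0 < η) (hr : 1 ≤ r) :
    2 * η * r ^ 2 * (log (1 + r ^ 2) + r ^ 2 / (1 + r ^ 2)) ≤
      20 * η * (2 / η) ^ (3 / 4 : ℝ) * (η * r ^ 4 / (1 + r ^ 2)) ^ (3 / 4 : ℝ) *
        r ^ (3 / 4 : ℝ) := by
  have hr0 : 0 < r := by linarith
  have h_frac : r ^ 2 / (1 + r ^ 2) ≤ 1 := by
    rw [div_le_one (by positivity)]
    linarith
  have h_lower : η * r ^ 2 / 2 ≤ η * r ^ 4 / (1 + r ^ 2) := by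
    rw [div_le_div_iff₀ two_pos (by positivity)]
    have : 1 + r ^ 2 ≤ 2 * r ^ 2 := by nlinarith
    nlinarith [mul_le_mul_of_nonneg_left this (by positivity : 0 ≤ η * r ^ 2)]
  have h_cancel : (2 / η) ^ (3 / 4 : ℝ) * (η * r ^ 2 / 2) ^ (3 / 4 : ℝ) = r ^ (3 / 2 : ℝ) := by
    rw [← mul_rpow (by positivity) (by positivity), show 2 / η * (η * r ^ 2 / 2) = r ^ 2 by
      field_simp, ← rpow_natCast, ← rpow_mul hr0.le]
    norm_num
  calc 2 * η * r ^ 2 * (log (1 + r ^ 2) + r ^ 2 / (1 + r ^ 2))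
      ≤ 2 * η * r ^ 2 * (10 * r ^ (1 / 4 : ℝ)) := by
        gcongr
        linarith [log_one_add_sq_add_one_le hr]
    _ = 20 * η * (r ^ (2 : ℝ) * r ^ (1 / 4 : ℝ)) := by rw [rpow_two]; ring
    _ = 20 * η * (r ^ (3 / 2 : ℝ) * r ^ (3 / 4 : ℝ)) := by
        rw [← rpow_add hr0, ← rpow_add hr0]
        norm_num
    _ = 20 * η * (2 / η) ^ (3 / 4 : ℝ) * (η * r ^ 2 / 2) ^ (3 / 4 : ℝ) * r ^ (3 / 4 : ℝ) := by
        rw [← h_cancel]; ring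
    _ ≤ _ := by gcongr

theorem stmt_11_general (m : ℕ) (η : ℝ) (hη : 0 < η)
    (G : EuclideanSpace ℝ (Fin m) → ℝ)
    (hGdef : ∀ U : EuclideanSpace ℝ (Fin m),
      G U = η * ‖U‖ ^ 2 * Real.log (1 + ‖U‖ ^ 2)) :
    ∃ r₀ : ℝ, 0 < r₀ ∧ ∃ r₁ : ℝ, 0 < r₁ ∧ ∃ γ₁ ∈ Set.Ioo (0 : ℝ) 1,
      ∃ γ₂ ∈ Set.Ioo (0 : ℝ) 1,
        ∀ U : EuclideanSpace ℝ (Fin m), r₁ ≤ ‖U‖ →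
          ⟪gradient G U, U⟫ ≤
            r₀ * ((1 / 2) * ⟪gradient G U, U⟫ - G U) ^ γ₁ * ‖U‖ ^ γ₂ := by
  refine ⟨20 * η * (2 / η) ^ (3 / 4 : ℝ), by positivity, 1, one_pos,
    3 / 4, ⟨by norm_num, by norm_num⟩, 3 / 4, ⟨by norm_num, by norm_num⟩, fun U hU => ?_⟩
  have hG : G = fun U => η * ‖U‖ ^ 2 * log (1 + ‖U‖ ^ 2) := funext hGdef
  have h_grad := (hasDerivAt_mul_mul_log_one_add η
    (neg_one_lt_zero.trans_le (sq_nonneg ‖U‖))).hasGradientAt_comp_norm_sq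
  have h_inner : ⟪gradient G U, U⟫ =
      2 * η * ‖U‖ ^ 2 * (log (1 + ‖U‖ ^ 2) + ‖U‖ ^ 2 / (1 + ‖U‖ ^ 2)) := by
    rw [hG, h_grad.gradient, real_inner_smul_left, real_inner_self_eq_norm_sq]
    ring
  have h_excess : (1 / 2) * ⟪gradient G U, U⟫ - G U = η * ‖U‖ ^ 4 / (1 + ‖U‖ ^ 2) := by
    rw [h_inner, hGdef]
    field_simp
    ring
  rw [h_excess, h_inner]
  exact sq_mul_log_one_add_sq_le_rpow_mul_rpow hη hU

theorem stmt_11 (m : ℕ) (hm : 1 ≤ m) (η : ℝ) (hη : 0 < η)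
    (G : EuclideanSpace ℝ (Fin m) → ℝ)
    (hGdef : ∀ U : EuclideanSpace ℝ (Fin m),
      G U = η * ‖U‖ ^ 2 * Real.log (1 + ‖U‖ ^ 2)) :
    ∃ r₀ : ℝ, 0 < r₀ ∧ ∃ r₁ : ℝ, 0 < r₁ ∧ ∃ γ₁ ∈ Set.Ioo (0 : ℝ) 1,
      ∃ γ₂ ∈ Set.Ioo (0 : ℝ) 1,
        ∀ U : EuclideanSpace ℝ (Fin m), r₁ ≤ ‖U‖ →
          ⟪gradient G U, U⟫ ≤
            r₀ * ((1 / 2) * ⟪gradient G U, U⟫ - G U) ^ γ₁ * ‖U‖ ^ γ₂ :=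
  stmt_11_general m η hη G hGdef
end

section
/- Let m ≥ 1, η > 0 and τ > 0, and define G : ℝ^m → ℝ by G(U) = ητ[1 − 1/ln(e+|U|)]|U|². Then for every U ∈ ℝ^m, ½(∇G(U),U) − G(U) = ητ|U|³ / (2(e+|U|) ln²(e+|U|)); in particular ½(∇G(U),U) − G(U) > 0 for all U ≠ 0. -/
open RealInnerProductSpace

/-!
Away from the origin a radial function `G U = φ ‖U‖` has gradient `(φ' ‖U‖ / ‖U‖) • U`, so
`⟪∇G U, U⟫ = ‖U‖ φ' ‖U‖`; this also holds trivially at `U = 0`. For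
`φ r = c (1 - 1 / L) r²` with `L = log (e + r)` one has `φ' r = c (r² / ((e + r) L²) + 2 r (1 - 1 / L))`,
and in `½ r φ' r - φ r` the terms `c (1 - 1 / L) r²` cancel, leaving `c r³ / (2 (e + r) L²)`.
-/

section Radial

variable {E : Type*} [NormedAddCommGroup E] [InnerProductSpace ℝ E]

theorem hasFDerivAt_norm_of_ne_zero {x : E} (hx : x ≠ 0) :
    HasFDerivAt (fun y : E => ‖y‖) (‖x‖⁻¹ • innerSL ℝ x) x := by
  have hsq := (hasStrictFDerivAt_norm_sq x).hasFDerivAt.sqrt (by positivity)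
  simp only [Real.sqrt_sq (norm_nonneg _)] at hsq
  convert hsq using 1
  ext y
  simp only [smul_apply, coe_innerSL_apply, smul_eq_mul, one_div, mul_inv_rev, nsmul_eq_mul,
    Nat.cast_ofNat]
  field_simp

variable [CompleteSpace E] {φ : ℝ → ℝ} {φ' : ℝ} {x : E}

theorem hasGradientAt_comp_norm (hφ : HasDerivAt φ φ' ‖x‖) (hx : x ≠ 0) :
    HasGradientAt (fun y => φ ‖y‖) ((φ' / ‖x‖) • x) x := by
  rw [hasGradientAt_iff_hasFDerivAt]
  refine (hφ.comp_hasFDerivAt x (hasFDerivAt_norm_of_ne_zero hx)).congr_fderiv ?_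
  ext y
  simp only [smul_apply, innerSL_apply_apply, smul_eq_mul,
    InnerProductSpace.toDual_apply_apply, real_inner_smul_left]
  ring

theorem inner_gradient_comp_norm_self_s16 (hφ : HasDerivAt φ φ' ‖x‖) :
    ⟪gradient (fun y => φ ‖y‖) x, x⟫ = ‖x‖ * φ' := by
  rcases eq_or_ne x 0 with rfl | hx
  · simp
  rw [(hasGradientAt_comp_norm hφ hx).gradient, real_inner_smul_left, real_inner_self_eq_norm_sq]
  field_simp

end Radial

theorem one_le_log_exp_one_add {r : ℝ} (hr : 0 ≤ r) : 1 ≤ Real.log (Real.exp 1 + r) := by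
  rw [Real.le_log_iff_exp_le (by positivity)]
  linarith

theorem hasDerivAt_one_sub_inv_log_mul_sq (c : ℝ) {r : ℝ} (hr : 0 ≤ r) :
    HasDerivAt (fun s => c * (1 - 1 / Real.log (Real.exp 1 + s)) * s ^ 2)
      (c * (r ^ 2 / ((Real.exp 1 + r) * Real.log (Real.exp 1 + r) ^ 2)
        + (1 - 1 / Real.log (Real.exp 1 + r)) * (2 * r))) r := by
  have he : Real.exp 1 + r ≠ 0 := by positivity
  have hL : Real.log (Real.exp 1 + r) ≠ 0 := by linarith [one_le_log_exp_one_add hr]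
  have hlog : HasDerivAt (fun s => Real.log (Real.exp 1 + s)) (1 / (Real.exp 1 + r)) r := by
    simpa using ((hasDerivAt_id r).const_add (Real.exp 1)).log he
  have hsq : HasDerivAt (fun s : ℝ => s ^ 2) (2 * r) r := by
    simpa using hasDerivAt_pow 2 r
  refine ((((hasDerivAt_const r (1 : ℝ)).fun_div hlog hL).const_sub 1).const_mul c).fun_mul hsq
    |>.congr_deriv ?_
  field_simp
  ring

theorem stmt_16_general (m : ℕ) (η τ : ℝ) (hη : 0 < η) (hτ : 0 < τ)
    (G : EuclideanSpace ℝ (Fin m) → ℝ)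
    (hGdef : ∀ U : EuclideanSpace ℝ (Fin m),
      G U = η * τ * (1 - 1 / Real.log (Real.exp 1 + ‖U‖)) * ‖U‖ ^ 2) :
    ∀ U : EuclideanSpace ℝ (Fin m),
      (1 / 2) * ⟪gradient G U, U⟫ - G U =
        η * τ * ‖U‖ ^ 3 / (2 * (Real.exp 1 + ‖U‖) * Real.log (Real.exp 1 + ‖U‖) ^ 2) ∧
      (U ≠ 0 → 0 < (1 / 2) * ⟪gradient G U, U⟫ - G U) := by
  intro U
  have hL : 0 < Real.log (Real.exp 1 + ‖U‖) := by linarith [one_le_log_exp_one_add (norm_nonneg U)]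
  have hinner :=
    inner_gradient_comp_norm_self_s16 (x := U) (hasDerivAt_one_sub_inv_log_mul_sq (η * τ) (norm_nonneg U))
  beta_reduce at hinner
  rw [← funext hGdef] at hinner
  have key : (1 / 2) * ⟪gradient G U, U⟫ - G U =
      η * τ * ‖U‖ ^ 3 / (2 * (Real.exp 1 + ‖U‖) * Real.log (Real.exp 1 + ‖U‖) ^ 2) := by
    rw [hinner, hGdef]
    field_simp
    ring
  refine ⟨key, fun hU => key ▸ ?_⟩
  have hUpos := norm_pos_iff.2 hU
  positivity

theorem stmt_16 (m : ℕ) (hm : 1 ≤ m) (η τ : ℝ) (hη : 0 < η) (hτ : 0 < τ)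
    (G : EuclideanSpace ℝ (Fin m) → ℝ)
    (hGdef : ∀ U : EuclideanSpace ℝ (Fin m),
      G U = η * τ * (1 - 1 / Real.log (Real.exp 1 + ‖U‖)) * ‖U‖ ^ 2) :
    ∀ U : EuclideanSpace ℝ (Fin m),
      (1 / 2) * ⟪gradient G U, U⟫ - G U =
        η * τ * ‖U‖ ^ 3 / (2 * (Real.exp 1 + ‖U‖) * Real.log (Real.exp 1 + ‖U‖) ^ 2) ∧
      (U ≠ 0 → 0 < (1 / 2) * ⟪gradient G U, U⟫ - G U) :=
  stmt_16_general m η τ hη hτ G hGdef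
end
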